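/- For every natural number l, r_l + r_{l+1} = 2 s_l, where r_m = Σ_j S(m,j)·j! and s_l = Σ_j S(l,j)·(j+1)!. -/

import Mathlib

/-!
Splitting `S(l+1, k+1) = S(l, k) + (k+1) S(l, k+1)` in `r_{l+1}` gives `r_{l+1} = s_l + T` with
`T = ∑ₖ k·S(l,k)·k!`, while `(k+1)! = k! + k·k!` gives `s_l = r_l + T`; hence `r_l + r_{l+1} = 2 s_l`.
-/

def stirling2 : ℕ → ℕ → ℕ
  | 0, 0 => 1
  | 0, _ + 1 => 0
  | _ + 1, 0 => 0
  | n + 1, k + 1 => stirling2 n k + (k + 1) * stirling2 n (k + 1)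

/-- Fubini number: number of preferential arrangements of an `l`-set. -/
def fubini (l : ℕ) : ℕ := ∑ k ∈ Finset.range (l + 1), stirling2 l k * Nat.factorial k

/-- Barred preferential arrangement number. -/
def barredFubini (l : ℕ) : ℕ :=
  ∑ k ∈ Finset.range (l + 1), stirling2 l k * Nat.factorial (k + 1)

open Finset Nat

lemma stirling2_eq_zero_of_lt : ∀ {n k : ℕ}, n < k → stirling2 n k = 0
  | 0, _ + 1, _ => rfl
  | n + 1, k + 1, h => by
    have hnk : n < k := Nat.lt_of_succ_lt_succ h
    simp [stirling2, stirling2_eq_zero_of_lt hnk, stirling2_eq_zero_of_lt (Nat.lt_succ_of_lt hnk)]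

lemma barredFubini_eq_fubini_add (l : ℕ) :
    barredFubini l = fubini l + ∑ k ∈ range (l + 1), k * stirling2 l k * k ! := by
  rw [fubini, barredFubini, ← sum_add_distrib]
  refine sum_congr rfl fun k _ => ?_
  rw [factorial_succ]
  ring

lemma fubini_succ_eq_barredFubini_add (l : ℕ) :
    fubini (l + 1) = barredFubini l + ∑ k ∈ range (l + 1), k * stirling2 l k * k ! := by
  have hshift : ∑ k ∈ range (l + 1), (k + 1) * stirling2 l (k + 1) * (k + 1)! =
      ∑ k ∈ range (l + 1), k * stirling2 l k * k ! := by
    have h := sum_range_succ' (fun k => k * stirling2 l k * k !) (l + 1)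
    rw [sum_range_succ, stirling2_eq_zero_of_lt (lt_succ_self l)] at h
    simpa only [mul_zero, zero_mul, add_zero] using h.symm
  rw [fubini, sum_range_succ', ← hshift, barredFubini, ← sum_add_distrib]
  simp only [stirling2, factorial_zero, mul_one, add_zero]
  refine sum_congr rfl fun k _ => ?_
  ring

theorem stmt_15 (l : ℕ) :
    fubini l + fubini (l + 1) = 2 * barredFubini l := by
  rw [fubini_succ_eq_barredFubini_add, two_mul, barredFubini_eq_fubini_add]
  ring
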